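/- Let 0 < τ₁ < ⋯ < τ_M ≤ 1, Q the collocation matrix, and Q_{Δ,M} = diag(τ₁/M, …, τ_M/M). For any x ∈ ℝ^M whose interpolating polynomial p = ∑ⱼ xⱼℓⱼ has zero coefficients in degrees 0 through k−1 (with 1 ≤ k ≤ M−1), the interpolating polynomial of (Q − Q_{Δ,M})x has zero coefficients in degrees 0 through k. -/

import Mathlib

open Polynomial Matrix Finset

noncomputable def collMat {M : ℕ} (τ : Fin M → ℝ) : Matrix (Fin M) (Fin M) ℝ :=
  Matrix.of fun i j => ∫ s in (0:ℝ)..(τ i), (Lagrange.basis Finset.univ τ j).eval s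

/-!
Write `p` for the interpolating polynomial of `x`. Since `(Q x)ᵢ = ∫₀^{τᵢ} p`, the values of
`(Q - Q_{Δ,M}) x` at the nodes are those of `r(t) = ∫₀ᵗ p - (t / M) p(t)`, whose coefficients are
`r₀ = 0` and `r_{n+1} = (1/(n+1) - 1/M) pₙ`. The factor vanishes for `n = M - 1`, so `deg r < M`
and `r` is itself the interpolating polynomial of `(Q - Q_{Δ,M}) x`; the coefficient formula
shifts the vanishing low-order coefficients of `p` up by one degree.
-/

section Antideriv

variable {K : Type*} [Field K]

noncomputable def antideriv (p : K[X]) : K[X] :=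
  p.sum fun n a => monomial (n + 1) (a / (n + 1))

theorem coeff_antideriv_zero (p : K[X]) : (antideriv p).coeff 0 = 0 := by
  simp [antideriv, Polynomial.sum_def, coeff_monomial]

theorem coeff_antideriv_succ (p : K[X]) (n : ℕ) :
    (antideriv p).coeff (n + 1) = p.coeff n / (n + 1) := by
  simp +contextual [antideriv, Polynomial.sum_def, coeff_monomial]

theorem derivative_antideriv [CharZero K] (p : K[X]) : derivative (antideriv p) = p := by
  ext n
  rw [coeff_derivative, coeff_antideriv_succ]
  field_simp

end Antideriv

theorem integral_eval_eq_eval_antideriv (p : ℝ[X]) (t : ℝ) :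
    ∫ s in (0:ℝ)..t, p.eval s = (antideriv p).eval t := by
  have hderiv (s : ℝ) : HasDerivAt (antideriv p).eval (p.eval s) s := by
    simpa only [derivative_antideriv] using (antideriv p).hasDerivAt s
  rw [intervalIntegral.integral_eq_sub_of_hasDerivAt (fun s _ => hderiv s)
    (p.continuous.intervalIntegrable 0 t), ← coeff_zero_eq_eval_zero, coeff_antideriv_zero,
    sub_zero]

/-- `Q - Q_{Δ,M}` transported to polynomials by interpolation: `r(t) = ∫₀ᵗ p - (t / M) p(t)`. -/
noncomputable def collocationDefect {K : Type*} [Field K] (M : ℕ) (p : K[X]) : K[X] :=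
  antideriv p - C (M : K)⁻¹ * (X * p)

section CollocationDefect

variable {K : Type*} [Field K] (M : ℕ)

theorem coeff_collocationDefect_zero (p : K[X]) : (collocationDefect M p).coeff 0 = 0 := by
  simp [collocationDefect, coeff_antideriv_zero]

theorem coeff_collocationDefect_succ (p : K[X]) (n : ℕ) :
    (collocationDefect M p).coeff (n + 1) = ((n + 1 : K)⁻¹ - (M : K)⁻¹) * p.coeff n := by
  rw [collocationDefect, coeff_sub, coeff_antideriv_succ, coeff_C_mul, coeff_X_mul]
  ring

theorem degree_collocationDefect_lt {p : K[X]} (hp : p.degree < M) :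
    (collocationDefect M p).degree < M := by
  rw [degree_lt_iff_coeff_zero]
  rintro (_ | n) hn
  · exact coeff_collocationDefect_zero M p
  rw [coeff_collocationDefect_succ]
  rcases (Nat.cast_le.mp hn : M ≤ n + 1).eq_or_lt with hM | hM
  · rw [hM]
    push_cast
    ring
  · rw [coeff_eq_zero_of_degree_lt (hp.trans_le (by exact_mod_cast Nat.lt_succ_iff.mp hM)),
      mul_zero]

theorem coeff_collocationDefect_eq_zero_of_le {p : K[X]} {k : ℕ}
    (hp : ∀ d < k, p.coeff d = 0) : ∀ d ≤ k, (collocationDefect M p).coeff d = 0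
  | 0, _ => coeff_collocationDefect_zero M p
  | n + 1, hn => by rw [coeff_collocationDefect_succ, hp n hn, mul_zero]

theorem eval_collocationDefect (p : ℝ[X]) (t : ℝ) :
    (collocationDefect M p).eval t = (∫ s in (0:ℝ)..t, p.eval s) - t / M * p.eval t := by
  rw [collocationDefect, integral_eval_eq_eval_antideriv]
  simp only [eval_sub, eval_mul, eval_C, eval_X]
  ring

end CollocationDefect

theorem collMat_mulVec {M : ℕ} (τ x : Fin M → ℝ) (i : Fin M) :
    (collMat τ *ᵥ x) i = ∫ s in (0:ℝ)..τ i, (Lagrange.interpolate univ τ x).eval s := by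
  simp only [Lagrange.interpolate_apply, eval_finsetSum, eval_mul, eval_C]
  rw [intervalIntegral.integral_finsetSum (f := fun j s => x j * (Lagrange.basis univ τ j).eval s)
    fun j _ => (continuous_const.mul (Lagrange.basis univ τ j).continuous).intervalIntegrable _ _]
  simp only [mulVec, dotProduct, collMat, of_apply, intervalIntegral.integral_const_mul, mul_comm]

theorem interpolate_collMat_sub_diagonal_mulVec {M : ℕ} {τ : Fin M → ℝ}
    (hτ : Function.Injective τ) (x : Fin M → ℝ) :
    Lagrange.interpolate univ τ ((collMat τ - diagonal fun i => τ i / M) *ᵥ x) =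
      collocationDefect M (Lagrange.interpolate univ τ x) := by
  have hinj : Set.InjOn τ (univ : Finset (Fin M)) := hτ.injOn
  symm
  refine Lagrange.eq_interpolate_of_eval_eq _ hinj ?_ fun i _ => ?_
  · simpa using degree_collocationDefect_lt M (by simpa using Lagrange.degree_interpolate_lt x hinj)
  · rw [eval_collocationDefect, sub_mulVec, Pi.sub_apply, collMat_mulVec, mulVec_diagonal,
      Lagrange.eval_interpolate_at_node x hinj (mem_univ i)]

theorem minSRNS_raises_degree_general (M : ℕ) (τ : Fin M → ℝ) (hmono : StrictMono τ)
    (k : ℕ)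
    (x : Fin M → ℝ)
    (hx : ∀ d : ℕ, d < k → (∑ j : Fin M, C (x j) * Lagrange.basis Finset.univ τ j).coeff d = 0) :
    ∀ d : ℕ, d ≤ k →
      (∑ j : Fin M,
        C ((collMat τ - Matrix.diagonal fun i => τ i / M).mulVec x j) *
          Lagrange.basis Finset.univ τ j).coeff d = 0 := by
  simp only [← Lagrange.interpolate_apply] at hx ⊢
  rw [interpolate_collMat_sub_diagonal_mulVec hmono.injective]
  exact coeff_collocationDefect_eq_zero_of_le M hx

/-- if the interpolating polynomial of `x` has vanishing coefficients in
degrees `0,…,k-1` (`1 ≤ k ≤ M-1`), then the interpolating polynomial of `(Q - Q_{Δ,M})x`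
has vanishing coefficients in degrees `0,…,k`. -/
theorem minSRNS_raises_degree (M : ℕ) (τ : Fin M → ℝ) (hmono : StrictMono τ)
    (hpos : ∀ i, 0 < τ i) (h1 : ∀ i, τ i ≤ 1) (k : ℕ) (hk1 : 1 ≤ k) (hkM : k ≤ M - 1)
    (x : Fin M → ℝ)
    (hx : ∀ d : ℕ, d < k → (∑ j : Fin M, C (x j) * Lagrange.basis Finset.univ τ j).coeff d = 0) :
    ∀ d : ℕ, d ≤ k →
      (∑ j : Fin M,
        C ((collMat τ - Matrix.diagonal fun i => τ i / M).mulVec x j) *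
          Lagrange.basis Finset.univ τ j).coeff d = 0 :=
  minSRNS_raises_degree_general M τ hmono k x hx
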